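/- Let E be a finite linearly ordered set and S_1, S_2, S_3 nonempty subsets such that S_1 ◁ S_2, S_2 ◁ S_3, S_1 and S_2 are incomparable under inclusion, and S_2 and S_3 are incomparable under inclusion. Then max S_1 < max S_2 < max S_3, max S_1 ∉ S_3, and S_1 ◁ S_3. -/

import Mathlib

/-! Given `max S ∈ S`, the strictness condition of `S ◁ T` says exactly that `max S ∉ T`. If
moreover `T ⊄ S`, the initial-segment condition forces some element of `T` above `max S`. For
`S₁ ◁ S₂ ◁ S₃` with `max S₁ < max S₂`, an element of `S₃` below `max S₁` lies in `S₂` and then in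
`S₁`; in particular `max S₁ ∉ S₃`, since `max S₁ ∉ S₂`. -/

/-- `S ◁ T`: `S` is nonempty, `S` is an initial segment of `S ∪ T` (every element of
`S ∪ T` that is `≤ max S` lies in `S`), and `(S \ {max S}) ∪ T ⊊ S ∪ T`. -/
def Tri {E : Type*} [LinearOrder E] (S T : Finset E) : Prop :=
  S.Nonempty ∧ ∀ m ∈ S, (∀ y ∈ S, y ≤ m) →
    (∀ x ∈ S ∪ T, x ≤ m → x ∈ S) ∧ S.erase m ∪ T ⊂ S ∪ T

theorem Finset.erase_union_ssubset_union_iff {E : Type*} [DecidableEq E] {S T : Finset E} {m : E}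
    (hm : m ∈ S) : S.erase m ∪ T ⊂ S ∪ T ↔ m ∉ T := by
  rw [Finset.ssubset_iff_of_subset (Finset.union_subset_union_left (Finset.erase_subset _ _))]
  constructor
  · rintro ⟨x, hx, hxnot⟩ hmT
    simp only [Finset.mem_union, Finset.mem_erase, not_or, not_and] at hx hxnot
    rcases hx with hxS | hxT
    · obtain rfl : x = m := by by_contra hne; exact hxnot.1 hne hxS
      exact hxnot.2 hmT
    · exact hxnot.2 hxT
  · intro hmT
    exact ⟨m, Finset.mem_union_left _ hm, by simp [hmT]⟩

namespace Tri

variable {E : Type*} [LinearOrder E] {S T U : Finset E}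

theorem iff_max' (hS : S.Nonempty) :
    Tri S T ↔ (∀ x ∈ T, x ≤ S.max' hS → x ∈ S) ∧ S.max' hS ∉ T := by
  constructor
  · rintro ⟨-, h⟩
    obtain ⟨hinit, hssub⟩ := h _ (S.max'_mem hS) (fun y hy => S.le_max' y hy)
    exact ⟨fun x hx => hinit x (Finset.mem_union_right _ hx),
      (Finset.erase_union_ssubset_union_iff (S.max'_mem hS)).mp hssub⟩
  · rintro ⟨hinit, hnotMem⟩
    refine ⟨hS, fun m hm hmax => ?_⟩
    obtain rfl : m = S.max' hS := le_antisymm (S.le_max' m hm) (hmax _ (S.max'_mem hS))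
    refine ⟨fun x hx hxle => ?_, (Finset.erase_union_ssubset_union_iff hm).mpr hnotMem⟩
    rcases Finset.mem_union.mp hx with hxS | hxT
    · exact hxS
    · exact hinit x hxT hxle

theorem mem_of_le_max' (h : Tri S T) {x : E} (hx : x ∈ T) (hxle : x ≤ S.max' h.1) : x ∈ S :=
  ((iff_max' h.1).mp h).1 x hx hxle

theorem max'_notMem (h : Tri S T) : S.max' h.1 ∉ T :=
  ((iff_max' h.1).mp h).2

theorem max'_lt_max' (h : Tri S T) (hT : T.Nonempty) (hTS : ¬ T ⊆ S) :
    S.max' h.1 < T.max' hT := by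
  by_contra! hle
  exact hTS fun x hx => h.mem_of_le_max' hx ((T.le_max' x hx).trans hle)

theorem trans (hST : Tri S T) (hTU : Tri T U) (hTS : ¬ T ⊆ S) : Tri S U := by
  have hlt := hST.max'_lt_max' hTU.1 hTS
  refine (iff_max' hST.1).mpr ⟨fun x hx hxle => ?_, fun hmU => ?_⟩
  · exact hST.mem_of_le_max' (hTU.mem_of_le_max' hx (hxle.trans hlt.le)) hxle
  · exact hST.max'_notMem (hTU.mem_of_le_max' hmU hlt.le)

end Tri

theorem stmt9_general {E : Type*} [LinearOrder E] (S₁ S₂ S₃ : Finset E)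
    (h₁ : S₁.Nonempty) (h₂ : S₂.Nonempty) (h₃ : S₃.Nonempty)
    (h12 : Tri S₁ S₂) (h23 : Tri S₂ S₃)
    (hi21 : ¬ S₂ ⊆ S₁)
    (hi32 : ¬ S₃ ⊆ S₂) :
    S₁.max' h₁ < S₂.max' h₂ ∧ S₂.max' h₂ < S₃.max' h₃ ∧
    S₁.max' h₁ ∉ S₃ ∧ Tri S₁ S₃ := by
  have h13 := h12.trans h23 hi21
  exact ⟨h12.max'_lt_max' h₂ hi21, h23.max'_lt_max' h₃ hi32, h13.max'_notMem, h13⟩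

/-- If `S₁ ◁ S₂`, `S₂ ◁ S₃`, and `S₁, S₂` (resp. `S₂, S₃`) are incomparable under
inclusion, then `max S₁ < max S₂ < max S₃`, `max S₁ ∉ S₃`, and `S₁ ◁ S₃`. -/
theorem stmt9 {E : Type*} [Fintype E] [LinearOrder E] (S₁ S₂ S₃ : Finset E)
    (h₁ : S₁.Nonempty) (h₂ : S₂.Nonempty) (h₃ : S₃.Nonempty)
    (h12 : Tri S₁ S₂) (h23 : Tri S₂ S₃)
    (hi12 : ¬ S₁ ⊆ S₂) (hi21 : ¬ S₂ ⊆ S₁)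
    (hi23 : ¬ S₂ ⊆ S₃) (hi32 : ¬ S₃ ⊆ S₂) :
    S₁.max' h₁ < S₂.max' h₂ ∧ S₂.max' h₂ < S₃.max' h₃ ∧
    S₁.max' h₁ ∉ S₃ ∧ Tri S₁ S₃ :=
  stmt9_general S₁ S₂ S₃ h₁ h₂ h₃ h12 h23 hi21 hi32
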